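/- Let r ≥ 1, x > 0, and k an integer with 2 ≤ k < 7/4 + r/2. On the region S = [N,∞)×[ε,c] with constants chosen so that f_r(xλ₂) > 0 on [0,c] and |f_r(xλ₁)| < f_r(xλ₂) on S, the function φ(λ₁,λ₂) = |f_r(xλ₁) − f_r(xλ₂)|^{2k}/(λ₁²−λ₂²)^{2k−2} · (λ₁λ₂)^{1+2r} satisfies ∫_S φ = ∞. -/

import Mathlib

open MeasureTheory

/-- The entire extension of `f_r(s) = J_r(s)/s^r`, via its power series. -/
noncomputable def fr (r : ℕ) (s : ℝ) : ℝ :=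
  ∑' l : ℕ, ((-1 : ℝ)) ^ l * s ^ (2 * l) /
    ((2 : ℝ) ^ (2 * l + r) * (l.factorial : ℝ) * ((r + l).factorial : ℝ))

/-!
For `λ₁ ≥ max N 1` and `λ₂ ∈ [ε, c]` the denominator is at most
`λ₁ ^ (2 (2k - 2)) ≤ λ₁ ^ (2 + 2r)` (this is where `k < 7/4 + r/2` enters), so the integrand is
at least `|f_r(xλ₁) - f_r(xλ₂)| ^ 2k ε ^ (1 + 2r) / λ₁`. Since `f_r(s)` is a nonconstant entire
function of `s²`, `λ₂ ↦ f_r(xλ₂)` is not constant on `[ε, c]`; by continuity there are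
`d, κ > 0` such that every value `f_r(xλ₁)` stays at distance `≥ d` from `f_r(xλ₂)` on a set of
`λ₂` of measure `≥ κ`. Hence the inner integral is `≥ C / λ₁`, which is not integrable at
infinity.
-/

open Filter Set
open scoped ENNReal

noncomputable def frCoeff (r l : ℕ) : ℝ :=
  (-1) ^ l / (2 ^ (2 * l + r) * l.factorial * (r + l).factorial)

lemma frCoeff_ne_zero (r l : ℕ) : frCoeff r l ≠ 0 := by
  unfold frCoeff; positivity

lemma frCoeff_succ (r n : ℕ) :
    frCoeff r (n + 1) = -frCoeff r n / (4 * (n + 1) * (r + n + 1)) := by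
  simp only [frCoeff, Nat.factorial_succ, ← add_assoc, pow_succ, mul_add, mul_one]
  push_cast
  field_simp
  ring

lemma tendsto_norm_frCoeff_succ_div (r : ℕ) :
    Tendsto (fun n => ‖frCoeff r (n + 1)‖ / ‖frCoeff r n‖) atTop (nhds 0) := by
  refine squeeze_zero (fun n => by positivity) (fun n => ?_)
    tendsto_one_div_add_atTop_nhds_zero_nat
  rw [frCoeff_succ, norm_div, norm_neg,
    div_div_cancel_left' (norm_ne_zero_iff.2 (frCoeff_ne_zero r n)),
    Real.norm_of_nonneg (by positivity), one_div]
  exact inv_anti₀ (by positivity) (by nlinarith)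

noncomputable def frSeries (r : ℕ) : FormalMultilinearSeries ℝ ℝ ℝ :=
  FormalMultilinearSeries.ofScalars ℝ (frCoeff r)

lemma frSeries_radius (r : ℕ) : (frSeries r).radius = ⊤ :=
  FormalMultilinearSeries.ofScalars_radius_eq_top_of_tendsto ℝ (frCoeff r)
    (Eventually.of_forall (frCoeff_ne_zero r)) (tendsto_norm_frCoeff_succ_div r)

lemma hasFPowerSeriesOnBall_frSeries (r : ℕ) :
    HasFPowerSeriesOnBall (frSeries r).sum (frSeries r) 0 ⊤ := by
  simpa only [frSeries_radius] using
    (frSeries r).hasFPowerSeriesOnBall (by simp [frSeries_radius])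

lemma analyticOnNhd_frSeries_sum (r : ℕ) : AnalyticOnNhd ℝ (frSeries r).sum univ :=
  fun _ _ => (hasFPowerSeriesOnBall_frSeries r).analyticAt_of_mem (by simp)

lemma deriv_frSeries_sum_zero (r : ℕ) : deriv (frSeries r).sum 0 = frCoeff r 1 := by
  rw [(hasFPowerSeriesOnBall_frSeries r).hasFPowerSeriesAt.deriv, frSeries,
    FormalMultilinearSeries.ofScalars_apply_eq]
  simp

lemma fr_eq_frSeries_sum (r : ℕ) (s : ℝ) : fr r s = (frSeries r).sum (s ^ 2) := by
  rw [frSeries, ← FormalMultilinearSeries.ofScalarsSum,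
    FormalMultilinearSeries.ofScalars_sum_eq, fr]
  refine tsum_congr fun l => ?_
  rw [frCoeff, smul_eq_mul, ← pow_mul]
  ring

lemma continuous_fr (r : ℕ) : Continuous (fr r) := by
  simp_rw [funext (fr_eq_frSeries_sum r)]
  exact (analyticOnNhd_frSeries_sum r).continuousOn.comp_continuous (continuous_pow 2)
    fun _ => mem_univ _

lemma exists_frSeries_sum_ne {u v : ℝ} (r : ℕ) (huv : u < v) :
    ∃ t ∈ Icc u v, (frSeries r).sum t ≠ (frSeries r).sum u := by
  by_contra! hconst
  have hglobal : EqOn (frSeries r).sum (fun _ => (frSeries r).sum u) univ :=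
    (analyticOnNhd_frSeries_sum r).eqOn_of_preconnected_of_eventuallyEq analyticOnNhd_const
      isPreconnected_univ (mem_univ ((u + v) / 2)) <|
      eventuallyEq_of_mem (Ioo_mem_nhds (by linarith) (by linarith))
        fun t ht => hconst t (Ioo_subset_Icc_self ht)
  have hderiv := deriv_frSeries_sum_zero r
  rw [show (frSeries r).sum = fun _ => (frSeries r).sum u from funext fun t => hglobal (mem_univ t),
    deriv_const] at hderiv
  exact frCoeff_ne_zero r 1 hderiv.symm

lemma exists_fr_ne {a b : ℝ} (r : ℕ) (ha : 0 ≤ a) (hab : a < b) :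
    ∃ s ∈ Icc a b, fr r s ≠ fr r a := by
  obtain ⟨t, ⟨hat, htb⟩, hne⟩ :=
    exists_frSeries_sum_ne r (pow_lt_pow_left₀ hab ha two_ne_zero)
  have ht : 0 ≤ t := (sq_nonneg a).trans hat
  refine ⟨√t, ⟨Real.le_sqrt_of_sq_le hat, (Real.sqrt_le_left (ha.trans hab.le)).2 htb⟩, ?_⟩
  rwa [fr_eq_frSeries_sum, fr_eq_frSeries_sum, Real.sq_sqrt ht]

lemma exists_fr_mul_ne {x a b : ℝ} (r : ℕ) (hx : 0 < x) (ha : 0 ≤ a) (hab : a < b) :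
    ∃ s ∈ Icc a b, fr r (x * s) ≠ fr r (x * a) := by
  obtain ⟨t, ht, hne⟩ := exists_fr_ne r (by positivity : 0 ≤ x * a) (mul_lt_mul_of_pos_left hab hx)
  refine ⟨t / x, ⟨(le_div_iff₀' hx).2 ht.1, (div_le_iff₀' hx).2 ht.2⟩, ?_⟩
  rwa [mul_div_cancel₀ _ hx.ne']

lemma exists_subset_Icc_volume_pos_abs_sub_lt {g : ℝ → ℝ} {a b s e : ℝ} (hg : ContinuousAt g s)
    (hab : a < b) (hs : s ∈ Icc a b) (he : 0 < e) :
    ∃ J ⊆ Icc a b, MeasurableSet J ∧ 0 < volume J ∧ ∀ z ∈ J, |g z - g s| < e := by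
  obtain ⟨δ, hδ, hnear⟩ := Metric.continuousAt_iff.1 hg e he
  refine ⟨Icc a b ∩ Metric.ball s δ, inter_subset_left,
    measurableSet_Icc.inter measurableSet_ball, Measure.measure_pos_of_nonempty_interior _ ?_,
    fun z hz => hnear hz.2⟩
  rw [interior_inter, interior_Icc, Metric.isOpen_ball.interior_eq]
  rw [← closure_Ioo hab.ne] at hs
  exact mem_closure_iff.1 hs _ Metric.isOpen_ball (Metric.mem_ball_self hδ) |>.mono
    fun z hz => ⟨hz.2, hz.1⟩

lemma exists_pos_volume_far_of_ne {g : ℝ → ℝ} {a b s₁ s₂ : ℝ} (hg : Continuous g)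
    (hab : a < b) (hs₁ : s₁ ∈ Icc a b) (hs₂ : s₂ ∈ Icc a b) (hne : g s₁ ≠ g s₂) :
    ∃ d > 0, ∃ κ > 0, ∀ t : ℝ,
      ∃ J ⊆ Icc a b, MeasurableSet J ∧ κ ≤ volume J ∧ ∀ z ∈ J, d ≤ |t - g z| := by
  set d := |g s₁ - g s₂|
  have hd : 0 < d := abs_sub_pos.2 hne
  obtain ⟨J₁, hJ₁, hJ₁m, hJ₁pos, hJ₁near⟩ :=
    exists_subset_Icc_volume_pos_abs_sub_lt hg.continuousAt hab hs₁ (by positivity : 0 < d / 4)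
  obtain ⟨J₂, hJ₂, hJ₂m, hJ₂pos, hJ₂near⟩ :=
    exists_subset_Icc_volume_pos_abs_sub_lt hg.continuousAt hab hs₂ (by positivity : 0 < d / 4)
  refine ⟨d / 4, by positivity, min (volume J₁) (volume J₂), lt_min hJ₁pos hJ₂pos, fun t => ?_⟩
  -- `t` is at distance at least `d / 2` from `g s₁` or from `g s₂`
  have htri : d ≤ |t - g s₁| + |t - g s₂| := by
    simpa only [abs_sub_comm t] using abs_sub_le (g s₁) t (g s₂)
  rcases le_or_gt (d / 2) |t - g s₁| with h₁ | h₁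
  · refine ⟨J₁, hJ₁, hJ₁m, min_le_left _ _, fun z hz => ?_⟩
    linarith [hJ₁near z hz, abs_sub_le t (g z) (g s₁)]
  · refine ⟨J₂, hJ₂, hJ₂m, min_le_right _ _, fun z hz => ?_⟩
    linarith [hJ₂near z hz, abs_sub_le t (g z) (g s₂)]

lemma ofReal_mul_le_setLIntegral {α : Type*} [MeasurableSpace α] {μ : Measure α}
    {f : α → ℝ} {J T : Set α} {a : ℝ} {κ : ℝ≥0∞} (hJT : J ⊆ T) (hJ : MeasurableSet J)
    (hκ : κ ≤ μ J) (hf : ∀ z ∈ J, a ≤ f z) :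
    ENNReal.ofReal a * κ ≤ ∫⁻ z in T, ENNReal.ofReal (f z) ∂μ :=
  calc ENNReal.ofReal a * κ ≤ ∫⁻ _ in J, ENNReal.ofReal a ∂μ := by
        rw [setLIntegral_const]; gcongr
    _ ≤ ∫⁻ z in J, ENNReal.ofReal (f z) ∂μ :=
        setLIntegral_mono' hJ fun z hz => ENNReal.ofReal_le_ofReal (hf z hz)
    _ ≤ ∫⁻ z in T, ENNReal.ofReal (f z) ∂μ := lintegral_mono_set hJT

lemma lintegral_Ici_ofReal_inv_eq_top {a : ℝ} (ha : 0 < a) :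
    ∫⁻ y in Ici a, ENNReal.ofReal y⁻¹ = ⊤ := by
  by_contra hfin
  refine not_integrableOn_Ici_inv (a := a) ⟨measurable_inv.aestronglyMeasurable, ?_⟩
  rw [hasFiniteIntegral_iff_ofReal]
  · exact lt_top_iff_ne_top.2 hfin
  · filter_upwards [ae_restrict_mem measurableSet_Ici] with y hy
    exact inv_nonneg.2 (ha.le.trans hy)

lemma setLIntegral_prod_eq_top_of_le {α β : Type*} [MeasurableSpace α] [MeasurableSpace β]
    {μ : Measure α} {ν : Measure β} [SFinite μ] [SFinite ν] {f : α × β → ℝ≥0∞} {g : α → ℝ≥0∞}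
    {s : Set α} {t : Set β} {C : ℝ≥0∞} (hf : Measurable f) (hs : MeasurableSet s)
    (hg : ∫⁻ y in s, g y ∂μ = ⊤) (hC : C ≠ 0) (hle : ∀ y ∈ s, C * g y ≤ ∫⁻ z in t, f (y, z) ∂ν) :
    ∫⁻ p in s ×ˢ t, f p ∂μ.prod ν = ⊤ := by
  rw [← Measure.prod_restrict, lintegral_prod _ hf.aemeasurable, eq_top_iff]
  calc ⊤ = C * ∫⁻ y in s, g y ∂μ := by rw [hg, ENNReal.mul_top hC]
    _ ≤ ∫⁻ y in s, C * g y ∂μ := lintegral_const_mul_le C g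
    _ ≤ ∫⁻ y in s, ∫⁻ z in t, f (y, z) ∂ν ∂μ := setLIntegral_mono' hs hle

lemma pow_mul_pow_mul_inv_le {D A ε y z : ℝ} {p m n : ℕ} (hD : 0 ≤ D) (hDA : D ≤ A)
    (hε : 0 < ε) (hεz : ε ≤ z) (hzy : z < y) (hy : 1 ≤ y) (hmn : 2 * m ≤ n + 1) :
    D ^ p * ε ^ n * y⁻¹ ≤ A ^ p / (y ^ 2 - z ^ 2) ^ m * (y * z) ^ n := by
  have hy0 : 0 < y := by linarith
  have hz0 : 0 < z := hε.trans_le hεz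
  have hgap : 0 < y ^ 2 - z ^ 2 := by nlinarith
  calc D ^ p * ε ^ n * y⁻¹ = D ^ p / y ^ (n + 1) * (y * ε) ^ n := by
        field_simp; ring
    _ ≤ D ^ p / (y ^ 2 - z ^ 2) ^ m * (y * z) ^ n := by
        gcongr
        calc (y ^ 2 - z ^ 2) ^ m ≤ (y ^ 2) ^ m := by gcongr; nlinarith
          _ = y ^ (2 * m) := by rw [pow_mul]
          _ ≤ y ^ (n + 1) := pow_le_pow_right₀ hy hmn
    _ ≤ A ^ p / (y ^ 2 - z ^ 2) ^ m * (y * z) ^ n := by gcongr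

theorem stmt_14_general (r : ℕ) (x : ℝ) (hx : 0 < x) (k : ℕ)
    (hk' : (k : ℝ) < 7 / 4 + (r : ℝ) / 2) (ε c N : ℝ) (hε : 0 < ε) (hεc : ε < c)
    (hlt : ∀ p ∈ Set.Ici N ×ˢ Set.Icc ε c, |fr r (x * p.1)| < fr r (x * p.2)) :
    ∫⁻ p in Set.Ici N ×ˢ Set.Icc ε c,
      ENNReal.ofReal
        (|fr r (x * p.1) - fr r (x * p.2)| ^ (2 * k)
          / (p.1 ^ 2 - p.2 ^ 2) ^ (2 * k - 2) * (p.1 * p.2) ^ (1 + 2 * r)) = ⊤ := by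
  have hcN : c < N := by
    by_contra! hNc
    have hmem : (max N ε, max N ε) ∈ Ici N ×ˢ Icc ε c :=
      ⟨mem_Ici.2 (le_max_left N ε), le_max_right N ε, max_le hNc hεc.le⟩
    exact (hlt _ hmem).not_ge (le_abs_self _)
  have hexp : 2 * (2 * k - 2) ≤ 1 + 2 * r + 1 := by
    have : 4 * k < 7 + 2 * r := by exact_mod_cast (by linarith : (4 * k : ℝ) < 7 + 2 * r)
    omega
  obtain ⟨s, hs, hne⟩ := exists_fr_mul_ne r hx hε.le hεc
  obtain ⟨d, hd, κ, hκ, hfar⟩ := exists_pos_volume_far_of_ne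
    ((continuous_fr r).comp (continuous_const_mul x)) hεc hs (left_mem_Icc.2 hεc.le) hne
  have hN1 : Ici (max N 1) ⊆ Ici N := Ici_subset_Ici.2 (le_max_left N 1)
  refine eq_top_mono (lintegral_mono_set (prod_mono hN1 le_rfl)) ?_
  have hfr_meas := (continuous_fr r).measurable
  rw [Measure.volume_eq_prod]
  refine setLIntegral_prod_eq_top_of_le (C := ENNReal.ofReal (d ^ (2 * k) * ε ^ (1 + 2 * r)) * κ)
    (by fun_prop) measurableSet_Ici (lintegral_Ici_ofReal_inv_eq_top (by positivity))
    (by positivity) fun y hy => ?_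
  obtain ⟨J, hJ, hJm, hκJ, hJfar⟩ := hfar (fr r (x * y))
  rw [mul_right_comm, ← ENNReal.ofReal_mul (by positivity)]
  refine ofReal_mul_le_setLIntegral hJ hJm hκJ fun z hz => ?_
  have hzy : z < y := (hJ hz).2.trans_lt (hcN.trans_le (hN1 hy))
  exact pow_mul_pow_mul_inv_le hd.le (hJfar z hz) hε (hJ hz).1 hzy ((le_max_right N 1).trans hy)
    hexp

/-- Type A singular point, necessity: for `r ≥ 1`, `x > 0` and integer `k` with
`2 ≤ k < 7/4 + r/2`, the test integral over `S = [N,∞) × [ε,c]` diverges, where the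
constants are chosen so that `f_r(xλ₂) > 0` on `[0,c]` and `|f_r(xλ₁)| < f_r(xλ₂)` on `S`. -/
theorem stmt_14 (r : ℕ) (hr : 1 ≤ r) (x : ℝ) (hx : 0 < x) (k : ℕ) (hk : 2 ≤ k)
    (hk' : (k : ℝ) < 7 / 4 + (r : ℝ) / 2) (ε c N : ℝ) (hε : 0 < ε) (hεc : ε < c)
    (hpos : ∀ s ∈ Set.Icc (0 : ℝ) c, 0 < fr r (x * s))
    (hlt : ∀ p ∈ Set.Ici N ×ˢ Set.Icc ε c, |fr r (x * p.1)| < fr r (x * p.2)) :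
    ∫⁻ p in Set.Ici N ×ˢ Set.Icc ε c,
      ENNReal.ofReal
        (|fr r (x * p.1) - fr r (x * p.2)| ^ (2 * k)
          / (p.1 ^ 2 - p.2 ^ 2) ^ (2 * k - 2) * (p.1 * p.2) ^ (1 + 2 * r)) = ⊤ :=
  stmt_14_general r x hx k hk' ε c N hε hεc hlt
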